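/- arXiv:2310.17002 — 7 statements merged into one kernel-verified Lean document; each statement's English description precedes it below -/
import Mathlib

section
/- Let S : [0,1] × {0,1} → ℝ be a proper scoring rule that is L-Lipschitz in its first argument, let m ≥ 1 be a natural number, and let q ∈ [0,1]. Then there exists a probability vector w ∈ Δ_{m+1} such that for every outcome y ∈ {0,1}, ∑_{i=0}^{m} w_i · (S(i/m, y) − S(q, y)) ≤ 2L/m². -/
noncomputable def Sbar (S : ℝ → Fin 2 → ℝ) (x p : ℝ) : ℝ :=
  (1 - p) * S x 0 + p * S x 1

def ProperScoringRule (S : ℝ → Fin 2 → ℝ) : Prop :=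
  ∀ p ∈ Set.Icc (0:ℝ) 1, ∀ x ∈ Set.Icc (0:ℝ) 1, Sbar S p p ≤ Sbar S x p

def LipschitzScoringRule (S : ℝ → Fin 2 → ℝ) (L : ℝ) : Prop :=
  ∀ x ∈ Set.Icc (0:ℝ) 1, ∀ x' ∈ Set.Icc (0:ℝ) 1, ∀ y : Fin 2,
    |S x y - S x' y| ≤ L * |x - x'|

/-!
Write `s x = S x 1 - S x 0` for the slope of the affine map `p ↦ Sbar S x p`. Properness makes
`s` antitone, so if `q` lies in the grid cell `[x₀, x₁]` of width `1/m`, some convex combination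
of `s x₀` and `s x₁` equals `s q`. Mixing the reports `x₀, x₁` with these weights, the excess
score is an affine function of the outcome with zero slope, so for both outcomes it equals its
value at `p = q`, the mixture of the divergences `Sbar S x q - Sbar S q q`. Properness at `x`
and the Lipschitz bound give `Sbar S x q - Sbar S q q ≤ 2L (x - q)² ≤ 2L/m²`.
-/

open Set

lemma Fintype.sum_single_add_single_mul {ι R : Type*} [Fintype ι] [DecidableEq ι]
    [NonUnitalNonAssocSemiring R] (k l : ι) (a b : R) (F : ι → R) :
    ∑ i, (Pi.single k a + Pi.single l b : ι → R) i * F i = a * F k + b * F l := by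
  simp [add_mul, Finset.sum_add_distrib, Pi.single_apply, ite_mul]

lemma exists_fin_div_le_and_le_succ_div {m : ℕ} (hm : 1 ≤ m) {q : ℝ} (hq : q ∈ Icc (0:ℝ) 1) :
    ∃ j : Fin m, (j : ℝ) / m ≤ q ∧ q ≤ ((j : ℝ) + 1) / m := by
  have hm₀ : (0:ℝ) < m := by exact_mod_cast hm
  simp only [div_le_iff₀ hm₀, le_div_iff₀ hm₀]
  by_cases hfloor : ⌊q * m⌋₊ < m
  · exact ⟨⟨_, hfloor⟩, Nat.floor_le (by positivity [hq.1]), (Nat.lt_floor_add_one _).le⟩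
  · have hqm : (m : ℝ) ≤ q * m :=
      (Nat.cast_le.2 (not_lt.1 hfloor)).trans (Nat.floor_le (by positivity [hq.1]))
    refine ⟨⟨m - 1, by omega⟩, ?_, ?_⟩ <;> push_cast [Nat.cast_sub hm] <;> nlinarith [hq.2]

lemma LipschitzScoringRule.nonneg {S : ℝ → Fin 2 → ℝ} {L : ℝ} (h : LipschitzScoringRule S L) :
    0 ≤ L := by
  have := h 0 (by norm_num) 1 (by norm_num) 0
  norm_num at this
  exact (abs_nonneg _).trans this

namespace ProperScoringRule

variable {S : ℝ → Fin 2 → ℝ}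

theorem antitoneOn_score_one_sub_score_zero (h : ProperScoringRule S) :
    AntitoneOn (fun x => S x 1 - S x 0) (Icc 0 1) := by
  intro x hx x' hx' hxx'
  have h₁ := h x hx x' hx'
  have h₂ := h x' hx' x hx
  simp only [Sbar] at h₁ h₂
  rcases hxx'.eq_or_lt with rfl | hlt
  · exact le_rfl
  · -- adding the two properness inequalities gives `(x' - x) * (s x' - s x) ≤ 0`
    nlinarith

theorem Sbar_sub_Sbar_self_le (h : ProperScoringRule S) {L : ℝ}
    (hlip : LipschitzScoringRule S L) {x q : ℝ} (hx : x ∈ Icc (0:ℝ) 1) (hq : q ∈ Icc (0:ℝ) 1) :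
    Sbar S x q - Sbar S q q ≤ 2 * L * (x - q) ^ 2 := by
  have hxq := h x hx q hq
  simp only [Sbar] at hxq ⊢
  calc (1 - q) * S x 0 + q * S x 1 - ((1 - q) * S q 0 + q * S q 1)
      ≤ (x - q) * ((S x 0 - S q 0) - (S x 1 - S q 1)) := by linarith
    _ ≤ |x - q| * |(S x 0 - S q 0) - (S x 1 - S q 1)| := by rw [← abs_mul]; exact le_abs_self _
    _ ≤ |x - q| * (|S x 0 - S q 0| + |S x 1 - S q 1|) := by gcongr; exact abs_sub _ _
    _ ≤ |x - q| * (L * |x - q| + L * |x - q|) := by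
        gcongr
        · exact hlip x hx q hq 0
        · exact hlip x hx q hq 1
    _ = 2 * L * (x - q) ^ 2 := by rw [← sq_abs]; ring

end ProperScoringRule

lemma two_point_sub_eq_Sbar_of_slope_eq (S : ℝ → Fin 2 → ℝ) {a b x₀ x₁ q : ℝ} (hab : a + b = 1)
    (hslope : a * (S x₀ 1 - S x₀ 0) + b * (S x₁ 1 - S x₁ 0) = S q 1 - S q 0) (y : Fin 2) :
    a * (S x₀ y - S q y) + b * (S x₁ y - S q y) =
      a * (Sbar S x₀ q - Sbar S q q) + b * (Sbar S x₁ q - Sbar S q q) := by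
  fin_cases y <;> simp only [Sbar, Fin.zero_eta, Fin.mk_one]
  · linear_combination (-q) * hslope + q * (S q 1 - S q 0) * hab
  · linear_combination (1 - q) * hslope - (1 - q) * (S q 1 - S q 0) * hab

theorem stmt0 (S : ℝ → Fin 2 → ℝ) (L : ℝ)
    (hproper : ProperScoringRule S) (hlip : LipschitzScoringRule S L)
    (m : ℕ) (hm : 1 ≤ m) (q : ℝ) (hq : q ∈ Set.Icc (0:ℝ) 1) :
    ∃ w : Fin (m+1) → ℝ, (∀ i, 0 ≤ w i) ∧ (∑ i, w i = 1) ∧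
      ∀ y : Fin 2, ∑ i : Fin (m+1), w i * (S ((i : ℕ) / (m : ℝ)) y - S q y)
        ≤ 2 * L / m ^ 2 := by
  obtain ⟨j, hx₀q, hqx₁⟩ := exists_fin_div_le_and_le_succ_div hm hq
  set x₀ : ℝ := (j : ℝ) / m
  set x₁ : ℝ := ((j : ℝ) + 1) / m
  have hx₁_eq : x₁ = x₀ + 1 / m := add_div _ _ _
  have hx₀_mem : x₀ ∈ Icc (0:ℝ) 1 := ⟨by positivity, by linarith [hq.2]⟩
  have hx₁_mem : x₁ ∈ Icc (0:ℝ) 1 :=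
    ⟨by linarith [hq.1], (div_le_one (by positivity)).2 (by exact_mod_cast j.isLt)⟩
  obtain ⟨a, b, ha, hb, hab, hslope⟩ :
      S q 1 - S q 0 ∈ segment ℝ (S x₀ 1 - S x₀ 0) (S x₁ 1 - S x₁ 0) := by
    rw [segment_symm]
    exact Icc_subset_segment
      ⟨hproper.antitoneOn_score_one_sub_score_zero hq hx₁_mem hqx₁,
        hproper.antitoneOn_score_one_sub_score_zero hx₀_mem hq hx₀q⟩
  refine ⟨Pi.single j.castSucc a + Pi.single j.succ b,
    Pi.le_def.1 (add_nonneg (Pi.single_nonneg.2 ha) (Pi.single_nonneg.2 hb)), ?_, fun y => ?_⟩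
  · simpa [hab] using Fintype.sum_single_add_single_mul j.castSucc j.succ a b 1
  rw [Fintype.sum_single_add_single_mul]
  push_cast [Fin.val_castSucc, Fin.val_succ]
  have hL := hlip.nonneg
  calc a * (S x₀ y - S q y) + b * (S x₁ y - S q y)
      = a * (Sbar S x₀ q - Sbar S q q) + b * (Sbar S x₁ q - Sbar S q q) :=
        two_point_sub_eq_Sbar_of_slope_eq S hab hslope y
    _ ≤ a * (2 * L * (x₀ - q) ^ 2) + b * (2 * L * (x₁ - q) ^ 2) := by
        gcongr
        · exact hproper.Sbar_sub_Sbar_self_le hlip hx₀_mem hq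
        · exact hproper.Sbar_sub_Sbar_self_le hlip hx₁_mem hq
    _ ≤ a * (2 * L * (1 / m) ^ 2) + b * (2 * L * (1 / m) ^ 2) := by
        gcongr a * (2 * L * ?_) + b * (2 * L * ?_)
        · exact sq_le_sq' (by linarith) (by linarith)
        · exact sq_le_sq' (by linarith) (by linarith)
    _ = 2 * L / m ^ 2 := by rw [← add_mul, hab]; ring
end

section
/- Let S : [0,1] × {0,1} → ℝ be a proper scoring rule. Then for all x, y, q ∈ [0,1], S̄(x, y) − S̄(q, y) ≤ (x − y)·[S(x,0) − S(y,0) + S(y,1) − S(x,1)]. -/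
theorem stmt2 (S : ℝ → Fin 2 → ℝ) (hproper : ProperScoringRule S)
    (x y q : ℝ) (hx : x ∈ Set.Icc (0:ℝ) 1) (hy : y ∈ Set.Icc (0:ℝ) 1)
    (hq : q ∈ Set.Icc (0:ℝ) 1) :
    Sbar S x y - Sbar S q y ≤ (x - y) * (S x 0 - S y 0 + S y 1 - S x 1) := by
  have h1 := hproper y hy q hq
  have h2 := hproper x hx y hy
  simp only [Sbar] at *
  nlinarith [h1, h2]
end

section
/- Let S : [0,1] × {0,1} → ℝ be a proper scoring rule that is L-Lipschitz in its first argument, and let ε ≥ 0. Then for all x, y, q ∈ [0,1] with |x − y| ≤ ε, S̄(x, y) − S̄(q, y) ≤ 2L·ε². -/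
theorem stmt3 (S : ℝ → Fin 2 → ℝ) (L : ℝ)
    (hproper : ProperScoringRule S) (hlip : LipschitzScoringRule S L)
    (ε : ℝ) (hε : 0 ≤ ε)
    (x y q : ℝ) (hx : x ∈ Set.Icc (0:ℝ) 1) (hy : y ∈ Set.Icc (0:ℝ) 1)
    (hq : q ∈ Set.Icc (0:ℝ) 1) (hxy : |x - y| ≤ ε) :
    Sbar S x y - Sbar S q y ≤ 2 * L * ε ^ 2 := by
  have hL : 0 ≤ L := by
    have h := hlip 0 (by norm_num) 1 (by norm_num) 0
    simp at h
    exact le_trans (abs_nonneg _) h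
  -- properness: S̄(y,y) ≤ S̄(q,y)
  have h1 : Sbar S y y ≤ Sbar S q y := hproper y hy q hq
  -- properness: S̄(x,x) ≤ S̄(y,x)
  have h2 : Sbar S x x ≤ Sbar S y x := hproper x hx y hy
  have ha : |S x 0 - S y 0| ≤ L * |x - y| := hlip x hx y hy 0
  have hb : |S x 1 - S y 1| ≤ L * |x - y| := hlip x hx y hy 1
  have key : Sbar S x y - Sbar S y y ≤
      (x - y) * ((S x 0 - S y 0) - (S x 1 - S y 1)) := by
    have : Sbar S x y - Sbar S y y =
        (Sbar S x x - Sbar S y x) +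
        (x - y) * ((S x 0 - S y 0) - (S x 1 - S y 1)) := by
      simp only [Sbar]; ring
    linarith
  have habs : (x - y) * ((S x 0 - S y 0) - (S x 1 - S y 1)) ≤
      |x - y| * (|S x 0 - S y 0| + |S x 1 - S y 1|) := by
    calc (x - y) * ((S x 0 - S y 0) - (S x 1 - S y 1))
        ≤ |(x - y) * ((S x 0 - S y 0) - (S x 1 - S y 1))| := le_abs_self _
      _ = |x - y| * |(S x 0 - S y 0) - (S x 1 - S y 1)| := abs_mul _ _
      _ ≤ |x - y| * (|S x 0 - S y 0| + |S x 1 - S y 1|) := by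
          apply mul_le_mul_of_nonneg_left (abs_sub _ _) (abs_nonneg _)
  have h3 : |x - y| * (|S x 0 - S y 0| + |S x 1 - S y 1|) ≤
      |x - y| * (2 * L * |x - y|) := by
    apply mul_le_mul_of_nonneg_left _ (abs_nonneg _)
    linarith
  have h4 : |x - y| * (2 * L * |x - y|) ≤ 2 * L * ε ^ 2 := by
    have h2L : 0 ≤ 2 * L := by linarith
    have := mul_le_mul hxy hxy (abs_nonneg _) hε
    nlinarith [abs_nonneg (x - y)]
  linarith
end

section
/- Let S : [0,1] × {0,1} → ℝ be a strictly proper scoring rule that is L-Lipschitz in its first argument, let m ≥ 1 be a natural number, and let q ∈ [0,1]. Let a ∈ ℝ^{m+1} satisfy ‖a‖_∞ = 1 and let b ≥ 0. Then there exists a probability vector w ∈ Δ_{m+1} such that for every y ∈ {0,1}: ∑_{i=0}^{m} w_i · [ a_i·(i/m − y) + b·(S(i/m, y) − S(q, y)) ] ≤ 1/m + 4bL/m². -/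
/-- A scoring rule is strictly proper if truthfully reporting uniquely minimizes
the expected score. -/
def StrictlyProperScoringRule (S : ℝ → Fin 2 → ℝ) : Prop :=
  ∀ p ∈ Set.Icc (0:ℝ) 1, ∀ x ∈ Set.Icc (0:ℝ) 1,
    Sbar S p p ≤ Sbar S x p ∧ (x ≠ p → Sbar S p p < Sbar S x p)

/-- A sign change exists for a sequence going from negative to nonnegative. -/
lemma sign_change_aux (f : ℕ → ℝ) : ∀ m : ℕ, f 0 < 0 → 0 ≤ f m →
    ∃ k, k < m ∧ f k < 0 ∧ 0 ≤ f (k+1) := by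
  intro m
  induction m with
  | zero => intro h0 hmm; linarith
  | succ n ih =>
    intro h0 hmm
    by_cases h : 0 ≤ f n
    · obtain ⟨k, hk, h1, h2⟩ := ih h0 h
      exact ⟨k, by omega, h1, h2⟩
    · exact ⟨n, by omega, not_le.mp h, hmm⟩

set_option maxHeartbeats 1000000 in
/-- Lemma 3.2 of the paper: for any halfspace direction `(a, b)` with
`‖a‖_∞ = 1` and `b ≥ 0`, there is a mixed forecast `w` whose expected vector
payoff lies in the halfspace, for every outcome `y ∈ {0,1}`. -/
theorem stmt6 (S : ℝ → Fin 2 → ℝ) (L : ℝ)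
    (hproper : StrictlyProperScoringRule S) (hlip : LipschitzScoringRule S L)
    (m : ℕ) (hm : 1 ≤ m) (q : ℝ) (hq : q ∈ Set.Icc (0:ℝ) 1)
    (a : Fin (m+1) → ℝ) (ha : (⨆ i, |a i|) = 1) (b : ℝ) (hb : 0 ≤ b) :
    ∃ w : Fin (m+1) → ℝ, (∀ i, 0 ≤ w i) ∧ (∑ i, w i = 1) ∧
      ∀ y : Fin 2,
        ∑ i : Fin (m+1), w i *
            (a i * ((i : ℕ) / (m : ℝ) - (y : ℕ)) +
              b * (S ((i : ℕ) / (m : ℝ)) y - S q y))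
          ≤ 1 / (m : ℝ) + 4 * b * L / m ^ 2 := by
  have hm0 : (0:ℝ) < m := by exact_mod_cast Nat.pos_of_ne_zero (by omega)
  have hmne : (m:ℝ) ≠ 0 := ne_of_gt hm0
  have hL : 0 ≤ L := by
    have h := hlip 0 (by constructor <;> norm_num) 1 (by constructor <;> norm_num) 0
    have h2 : |(0:ℝ) - 1| = 1 := by norm_num
    rw [h2, mul_one] at h
    exact le_trans (abs_nonneg _) h
  have hbL : 0 ≤ b * L := mul_nonneg hb hL
  have habs : ∀ i, |a i| ≤ 1 := by
    intro i
    rw [← ha]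
    exact le_ciSup (f := fun i => |a i|) (Set.finite_range _).bddAbove i
  have hxmem : ∀ i : Fin (m+1), ((i:ℕ):ℝ)/m ∈ Set.Icc (0:ℝ) 1 := by
    intro i
    constructor
    · positivity
    · rw [div_le_one hm0]
      exact_mod_cast Nat.le_of_lt_succ i.isLt
  obtain ⟨d, hd⟩ : ∃ d' : ℝ → ℝ, d' = fun z => S z 1 - S z 0 := ⟨_, rfl⟩
  obtain ⟨E, hE⟩ : ∃ E' : Fin (m+1) → ℝ → ℝ, E' = fun i p =>
      a i * (((i:ℕ):ℝ)/m - p) + b * (Sbar S (((i:ℕ):ℝ)/m) p - Sbar S q p) := ⟨_, rfl⟩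
  obtain ⟨c, hc⟩ : ∃ c' : Fin (m+1) → ℝ, c' = fun i =>
      a i - b * (d (((i:ℕ):ℝ)/m) - d q) := ⟨_, rfl⟩
  have haffine : ∀ (i : Fin (m+1)) (p p' : ℝ), E i p' = E i p - (p' - p) * c i := by
    intro i p p'
    simp only [hE, hc, hd, Sbar]
    ring
  have hP1 : ∀ i : Fin (m+1), E i (((i:ℕ):ℝ)/m) ≤ 0 := by
    intro i
    have h := (hproper (((i:ℕ):ℝ)/m) (hxmem i) q hq).1
    have he : E i (((i:ℕ):ℝ)/m)
        = b * (Sbar S (((i:ℕ):ℝ)/m) (((i:ℕ):ℝ)/m) - Sbar S q (((i:ℕ):ℝ)/m)) := by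
      simp only [hE]; ring
    rw [he]
    exact mul_nonpos_of_nonneg_of_nonpos hb (by linarith)
  have hKey : ∀ z ∈ Set.Icc (0:ℝ) 1, ∀ p ∈ Set.Icc (0:ℝ) 1,
      Sbar S z p - Sbar S p p ≤ (z - p) * (d p - d z) := by
    intro z hz p hp
    have h1 := (hproper z hz p hp).1
    have i1 : Sbar S z p = Sbar S z z + (p - z) * d z := by simp only [Sbar, hd]; ring
    have i2 : Sbar S p z = Sbar S p p + (z - p) * d p := by simp only [Sbar, hd]; ring
    have expand : (z - p) * (d p - d z) = (z - p) * d p + (p - z) * d z := by ring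
    rw [expand]
    linarith
  have hdlip : ∀ z ∈ Set.Icc (0:ℝ) 1, ∀ z' ∈ Set.Icc (0:ℝ) 1,
      |d z - d z'| ≤ 2 * L * |z - z'| := by
    intro z hz z' hz'
    have h1 := hlip z hz z' hz' 1
    have h0 := hlip z hz z' hz' 0
    have he : d z - d z' = (S z 1 - S z' 1) - (S z 0 - S z' 0) := by
      simp only [hd]; ring
    rw [he]
    calc |(S z 1 - S z' 1) - (S z 0 - S z' 0)|
        ≤ |S z 1 - S z' 1| + |S z 0 - S z' 0| := abs_sub _ _
      _ ≤ 2 * L * |z - z'| := by linarith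
  have hrhs4 : 0 ≤ 1/(m:ℝ) + 4*b*L/(m:ℝ)^2 := by
    have h1 : 0 ≤ 1/(m:ℝ) := by positivity
    have h2 : 0 ≤ 4*b*L/(m:ℝ)^2 := div_nonneg (by nlinarith) (by positivity)
    linarith
  obtain ⟨i0, i1, lam, hl0, hl1, hkey⟩ : ∃ (i0 i1 : Fin (m+1)) (lam : ℝ),
      0 ≤ lam ∧ lam ≤ 1 ∧ ∀ t : ℝ, t = 0 ∨ t = 1 →
        lam * E i0 t + (1 - lam) * E i1 t ≤ 1/(m:ℝ) + 4*b*L/(m:ℝ)^2 := by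
    by_cases hc0 : 0 ≤ c 0
    · refine ⟨0, 0, 1, zero_le_one, le_refl 1, ?_⟩
      have hx0 : (((0:Fin (m+1)):ℕ):ℝ)/m = 0 := by simp
      have h1 : E 0 0 ≤ 0 := by have h := hP1 0; rwa [hx0] at h
      intro t ht
      rcases ht with rfl | rfl
      · have hg : (1:ℝ) * E 0 0 + (1 - 1) * E 0 0 = E 0 0 := by ring
        rw [hg]
        exact le_trans h1 hrhs4
      · have h2 := haffine 0 0 1
        have h3 : E 0 1 ≤ 0 := by
          rw [h2]
          have : 0 ≤ (1 - (0:ℝ)) * c 0 := by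
            apply mul_nonneg (by norm_num) hc0
          linarith
        have hg : (1:ℝ) * E 0 1 + (1 - 1) * E 0 1 = E 0 1 := by ring
        rw [hg]
        exact le_trans h3 hrhs4
    · by_cases hcm : c (Fin.last m) ≤ 0
      · refine ⟨Fin.last m, Fin.last m, 1, zero_le_one, le_refl 1, ?_⟩
        have hx1 : (((Fin.last m : Fin (m+1)):ℕ):ℝ)/m = 1 := by
          simp [Fin.last, div_self hmne]
        have h1 : E (Fin.last m) 1 ≤ 0 := by
          have h := hP1 (Fin.last m); rwa [hx1] at h
        intro t ht
        rcases ht with rfl | rfl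
        · have h2 := haffine (Fin.last m) 1 0
          have h3 : E (Fin.last m) 0 ≤ 0 := by
            rw [h2]
            have h4 : 0 ≤ ((0:ℝ) - 1) * c (Fin.last m) := by nlinarith
            linarith
          have hg : (1:ℝ) * E (Fin.last m) 0 + (1 - 1) * E (Fin.last m) 0
              = E (Fin.last m) 0 := by ring
          rw [hg]
          exact le_trans h3 hrhs4
        · have hg : (1:ℝ) * E (Fin.last m) 1 + (1 - 1) * E (Fin.last m) 1
              = E (Fin.last m) 1 := by ring
          rw [hg]
          exact le_trans h1 hrhs4
      · push_neg at hc0 hcm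
        obtain ⟨k, hk, hk0, hk1⟩ := sign_change_aux
          (fun n => c ⟨min n m, Nat.lt_succ_of_le (Nat.min_le_right n m)⟩) m
          (by
            have he : (⟨min 0 m, Nat.lt_succ_of_le (Nat.min_le_right 0 m)⟩ : Fin (m+1)) = 0 := by
              apply Fin.ext; simp
            simpa [he] using hc0)
          (by
            have he : (⟨min m m, Nat.lt_succ_of_le (Nat.min_le_right m m)⟩ : Fin (m+1))
                = Fin.last m := by
              apply Fin.ext; simp [Fin.last]
            simp only [he]
            linarith)
        have hkm : k < m := hk
        obtain ⟨i0, hi0⟩ : ∃ i0 : Fin (m+1), i0 = ⟨k, by omega⟩ := ⟨_, rfl⟩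
        obtain ⟨i1, hi1⟩ : ∃ i1 : Fin (m+1), i1 = ⟨k+1, by omega⟩ := ⟨_, rfl⟩
        have hci0 : c i0 < 0 := by
          have he : (⟨min k m, Nat.lt_succ_of_le (Nat.min_le_right k m)⟩ : Fin (m+1)) = i0 := by
            rw [hi0]; apply Fin.ext; simp; omega
          simpa [he] using hk0
        have hci1 : 0 ≤ c i1 := by
          have he : (⟨min (k+1) m, Nat.lt_succ_of_le (Nat.min_le_right (k+1) m)⟩ : Fin (m+1))
              = i1 := by
            rw [hi1]; apply Fin.ext; simp; omega
          simpa [he] using hk1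
        have hden : 0 < c i1 - c i0 := by linarith
        obtain ⟨lam, hlam⟩ : ∃ l : ℝ, l = c i1 / (c i1 - c i0) := ⟨_, rfl⟩
        have hl0 : 0 ≤ lam := by rw [hlam]; exact div_nonneg hci1 (le_of_lt hden)
        have hl1 : lam ≤ 1 := by
          rw [hlam]; exact (div_le_one hden).mpr (by linarith)
        refine ⟨i0, i1, lam, hl0, hl1, ?_⟩
        have hzero : lam * c i0 + (1 - lam) * c i1 = 0 := by
          rw [hlam]
          field_simp
          ring
        -- the grid step
        have hstep : (((i1:ℕ):ℝ))/m - (((i0:ℕ):ℝ))/m = 1/m := by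
          rw [hi0, hi1]
          show (((k+1:ℕ)):ℝ)/m - ((k:ℕ):ℝ)/m = 1/m
          rw [div_sub_div_same]
          push_cast
          ring_nf
        -- the key bound at the sign change
        have hE1 : E i1 (((i1:ℕ):ℝ)/m) ≤ 0 := hP1 i1
        have hE0 : E i0 (((i1:ℕ):ℝ)/m) ≤ 1/(m:ℝ) + 2*b*L/(m:ℝ)^2 := by
          have hx0m := hxmem i0
          have hx1m := hxmem i1
          have hA : a i0 * (((i0:ℕ):ℝ)/m - ((i1:ℕ):ℝ)/m) ≤ 1/m := by
            have hna : -(a i0) ≤ 1 := by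
              have h1 := habs i0
              have h2 := neg_abs_le (a i0)
              linarith
            have heq : a i0 * (((i0:ℕ):ℝ)/m - ((i1:ℕ):ℝ)/m) = -(a i0) * (1/m) := by
              have h3 : ((i0:ℕ):ℝ)/m - ((i1:ℕ):ℝ)/m = -(1/m) := by linarith [hstep]
              rw [h3]; ring
            rw [heq]
            calc -(a i0) * (1/m) ≤ 1 * (1/m) :=
                  mul_le_mul_of_nonneg_right hna (by positivity)
              _ = 1/m := by ring
          have hB : Sbar S (((i0:ℕ):ℝ)/m) (((i1:ℕ):ℝ)/m) - Sbar S q (((i1:ℕ):ℝ)/m)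
              ≤ 2*L/(m:ℝ)^2 := by
            have h1 := hKey (((i0:ℕ):ℝ)/m) hx0m (((i1:ℕ):ℝ)/m) hx1m
            have h2 := (hproper (((i1:ℕ):ℝ)/m) hx1m q hq).1
            have h3 := hdlip (((i1:ℕ):ℝ)/m) hx1m (((i0:ℕ):ℝ)/m) hx0m
            have habs1 : |(((i1:ℕ):ℝ))/m - ((i0:ℕ):ℝ)/m| = 1/m := by
              rw [hstep]; exact abs_of_pos (by positivity)
            rw [habs1] at h3
            have h4 : (((i0:ℕ):ℝ)/m - ((i1:ℕ):ℝ)/m) * (d (((i1:ℕ):ℝ)/m) - d (((i0:ℕ):ℝ)/m))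
                ≤ 2*L/(m:ℝ)^2 := by
              calc (((i0:ℕ):ℝ)/m - ((i1:ℕ):ℝ)/m) * (d (((i1:ℕ):ℝ)/m) - d (((i0:ℕ):ℝ)/m))
                  ≤ |(((i0:ℕ):ℝ)/m - ((i1:ℕ):ℝ)/m) * (d (((i1:ℕ):ℝ)/m) - d (((i0:ℕ):ℝ)/m))| :=
                    le_abs_self _
                _ = |(((i0:ℕ):ℝ)/m - ((i1:ℕ):ℝ)/m)| * |d (((i1:ℕ):ℝ)/m) - d (((i0:ℕ):ℝ)/m)| :=
                    abs_mul _ _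
                _ ≤ (1/m) * (2 * L * (1/m)) := by
                    have e1 : |(((i0:ℕ):ℝ)/m - ((i1:ℕ):ℝ)/m)| = 1/m := by
                      rw [abs_sub_comm]; exact habs1
                    rw [e1]
                    exact mul_le_mul_of_nonneg_left h3 (by positivity)
                _ = 2*L/(m:ℝ)^2 := by ring
            linarith
          have he : E i0 (((i1:ℕ):ℝ)/m)
              = a i0 * (((i0:ℕ):ℝ)/m - ((i1:ℕ):ℝ)/m)
                + b * (Sbar S (((i0:ℕ):ℝ)/m) (((i1:ℕ):ℝ)/m) - Sbar S q (((i1:ℕ):ℝ)/m)) := by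
            simp only [hE]
          rw [he]
          have hBb : b * (Sbar S (((i0:ℕ):ℝ)/m) (((i1:ℕ):ℝ)/m) - Sbar S q (((i1:ℕ):ℝ)/m))
              ≤ b * (2*L/(m:ℝ)^2) := mul_le_mul_of_nonneg_left hB hb
          have hrw : b * (2*L/(m:ℝ)^2) = 2*b*L/(m:ℝ)^2 := by ring
          linarith
        intro t ht
        have ha0 := haffine i0 (((i1:ℕ):ℝ)/m) t
        have ha1 := haffine i1 (((i1:ℕ):ℝ)/m) t
        have heq : lam * E i0 t + (1 - lam) * E i1 t
            = lam * E i0 (((i1:ℕ):ℝ)/m) + (1 - lam) * E i1 (((i1:ℕ):ℝ)/m) := by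
          rw [ha0, ha1]
          linear_combination (-(t - ((i1:ℕ):ℝ)/m)) * hzero
        rw [heq]
        have hrhs2 : 0 ≤ 1/(m:ℝ) + 2*b*L/(m:ℝ)^2 := by
          have h1 : 0 ≤ 1/(m:ℝ) := by positivity
          have h2 : 0 ≤ 2*b*L/(m:ℝ)^2 := div_nonneg (by nlinarith) (by positivity)
          linarith
        have t1 : lam * E i0 (((i1:ℕ):ℝ)/m) ≤ 1/(m:ℝ) + 2*b*L/(m:ℝ)^2 := by
          calc lam * E i0 (((i1:ℕ):ℝ)/m) ≤ lam * (1/(m:ℝ) + 2*b*L/(m:ℝ)^2) :=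
                mul_le_mul_of_nonneg_left hE0 hl0
            _ ≤ 1 * (1/(m:ℝ) + 2*b*L/(m:ℝ)^2) :=
                mul_le_mul_of_nonneg_right hl1 hrhs2
            _ = 1/(m:ℝ) + 2*b*L/(m:ℝ)^2 := by ring
        have t2 : (1 - lam) * E i1 (((i1:ℕ):ℝ)/m) ≤ 0 :=
          mul_nonpos_of_nonneg_of_nonpos (by linarith) hE1
        have h2m : 2*b*L/(m:ℝ)^2 ≤ 4*b*L/(m:ℝ)^2 := by
          apply div_le_div_of_nonneg_right ?_ (by positivity)
          nlinarith
        linarith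
  -- assemble the weight vector
  refine ⟨fun i => (if i = i0 then lam else 0) + (if i = i1 then 1 - lam else 0), ?_, ?_, ?_⟩
  · intro i
    dsimp only
    split_ifs <;> linarith
  · simp only [Finset.sum_add_distrib, Finset.sum_ite_eq', Finset.mem_univ, if_true]
    ring
  · intro y
    have hsum : ∀ F : Fin (m+1) → ℝ,
        ∑ i, ((if i = i0 then lam else 0) + (if i = i1 then 1 - lam else 0)) * F i
          = lam * F i0 + (1 - lam) * F i1 := by
      intro F
      simp only [add_mul, ite_mul, zero_mul, Finset.sum_add_distrib, Finset.sum_ite_eq',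
        Finset.mem_univ, if_true]
    rw [hsum]
    have ht : ((y:ℕ):ℝ) = 0 ∨ ((y:ℕ):ℝ) = 1 := by fin_cases y <;> norm_num
    have key := hkey ((y:ℕ):ℝ) ht
    have e : ∀ i : Fin (m+1), E i ((y:ℕ):ℝ)
        = a i * (((i:ℕ):ℝ)/m - ((y:ℕ):ℝ)) + b * (S (((i:ℕ):ℝ)/m) y - S q y) := by
      intro i
      fin_cases y <;> simp only [hE, Sbar] <;> norm_num
    rw [e i0, e i1] at key
    exact key
end

section
/- Fix a natural number m ≥ 1 and a real constant L ≥ 0. Let 𝒮^m_approach = {(x, z) ∈ ℝ^{m+1} × ℝ : ‖x‖₁ ≤ 1/m and z ≤ 4L/m²} and 𝒦 = {(a, b) ∈ ℝ^{m+1} × ℝ : ‖a‖_∞ ≤ 1 and 0 ≤ b ≤ 1}. Let v = (x, z) ∈ ℝ^{m+1} × ℝ satisfy ‖x‖₁ ≥ 1/m and z ≥ 4L/m². Then dist₁(v, 𝒮^m_approach) = ‖x‖₁ − 1/m + z − 4L/m² = −1/m − 4L/m² − min_{θ ∈ 𝒦} ⟨−v, θ⟩, where ⟨−v, θ⟩ =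 ⟨−x, a⟩ + (−z)·b for θ = (a, b). -/
/-- Lemma 3.4 of the paper: for a point `v = (x, z)` outside the target set
`𝒮^m_approach` (in both components), the ℓ₁ distance to the target set equals
`‖x‖₁ − 1/m + z − 4L/m²`, which equals
`−1/m − 4L/m² − min_{θ ∈ 𝒦} ⟨−v, θ⟩`. -/
theorem stmt8 (m : ℕ) (hm : 1 ≤ m) (L : ℝ) (hL : 0 ≤ L)
    (x : Fin (m+1) → ℝ) (z : ℝ)
    (hx : 1 / (m : ℝ) ≤ ∑ i, |x i|) (hz : 4 * L / m ^ 2 ≤ z) :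
    sInf {d : ℝ | ∃ u : (Fin (m+1) → ℝ) × ℝ,
        ((∑ i, |u.1 i|) ≤ 1 / (m : ℝ) ∧ u.2 ≤ 4 * L / m ^ 2) ∧
        d = (∑ i, |x i - u.1 i|) + |z - u.2|}
      = (∑ i, |x i|) - 1 / (m : ℝ) + z - 4 * L / m ^ 2 ∧
    (∑ i, |x i|) - 1 / (m : ℝ) + z - 4 * L / m ^ 2
      = -(1 / (m : ℝ)) - 4 * L / m ^ 2 -
          sInf {s : ℝ | ∃ θ : (Fin (m+1) → ℝ) × ℝ,
            ((⨆ i, |θ.1 i|) ≤ 1 ∧ 0 ≤ θ.2 ∧ θ.2 ≤ 1) ∧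
            s = (∑ i, (-(x i)) * θ.1 i) + (-z) * θ.2} := by
  have hm0 : (0:ℝ) < m := by positivity
  have hS0 : (0:ℝ) < ∑ i, |x i| := lt_of_lt_of_le (by positivity) hx
  set S : ℝ := ∑ i, |x i| with hSdef
  have hlm0 : (0:ℝ) ≤ 4 * L / m ^ 2 := by positivity
  have hz0 : 0 ≤ z := le_trans hlm0 hz
  constructor
  · -- first equality
    apply le_antisymm
    · -- sInf ≤ value: exhibit the minimizer
      apply csInf_le
      · -- bddBelow
        refine ⟨S - 1 / m + z - 4 * L / m ^ 2, ?_⟩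
        rintro d ⟨u, ⟨hu1, hu2⟩, rfl⟩
        have h1 : S - 1 / m ≤ ∑ i, |x i - u.1 i| := by
          have : S - ∑ i, |u.1 i| ≤ ∑ i, |x i - u.1 i| := by
            rw [hSdef, ← Finset.sum_sub_distrib]
            exact Finset.sum_le_sum fun i _ => abs_sub_abs_le_abs_sub _ _
          linarith
        have h2 : z - 4 * L / m ^ 2 ≤ |z - u.2| := by
          have := le_abs_self (z - u.2); linarith
        linarith
      · refine ⟨(fun i => (1 / (m * S)) * x i, 4 * L / m ^ 2), ⟨?_, le_refl _⟩, ?_⟩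
        · have : ∀ i, |(1 / (m * S)) * x i| = (1 / (m * S)) * |x i| := fun i => by
            rw [abs_mul, abs_of_nonneg (by positivity : (0:ℝ) ≤ 1 / (m * S))]
          simp only [this, ← Finset.mul_sum, ← hSdef]
          exact le_of_eq (by field_simp)
        · have hc : (0:ℝ) ≤ 1 - 1 / (m * S) := by
            rw [sub_nonneg, div_le_one (by positivity)]
            calc (1:ℝ) = m * (1/m) := by field_simp
            _ ≤ m * S := by nlinarith
          have : ∀ i, |x i - (1 / (m * S)) * x i| = (1 - 1 / (m * S)) * |x i| := fun i => by
            rw [← abs_of_nonneg hc, ← abs_mul]; ring_nf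
          rw [show |z - 4 * L / m ^ 2| = z - 4 * L / m ^ 2 from
            abs_of_nonneg (by linarith)]
          have hsum : (∑ i, |x i - (1 / (↑m * S)) * x i|) = S - 1 / m := by
            simp only [this, ← Finset.mul_sum, ← hSdef]
            field_simp
          rw [hsum]; ring
    · -- value ≤ sInf
      apply le_csInf
      · exact ⟨(∑ i, |x i - 0|) + |z - 4 * L / m ^ 2|,
          ⟨(0, 4 * L / m ^ 2), ⟨by simpa using le_of_lt (by positivity : (0:ℝ) < 1/m), le_refl _⟩, rfl⟩⟩
      · rintro d ⟨u, ⟨hu1, hu2⟩, rfl⟩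
        have h1 : S - ∑ i, |u.1 i| ≤ ∑ i, |x i - u.1 i| := by
          rw [hSdef, ← Finset.sum_sub_distrib]
          exact Finset.sum_le_sum fun i _ => abs_sub_abs_le_abs_sub _ _
        have h2 := le_abs_self (z - u.2)
        linarith
  · -- second equality: sInf over θ equals -S - z
    have : sInf {s : ℝ | ∃ θ : (Fin (m+1) → ℝ) × ℝ,
            ((⨆ i, |θ.1 i|) ≤ 1 ∧ 0 ≤ θ.2 ∧ θ.2 ≤ 1) ∧
            s = (∑ i, (-(x i)) * θ.1 i) + (-z) * θ.2} = -S - z := by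
      apply le_antisymm
      · apply csInf_le
        · refine ⟨-S - z, ?_⟩
          rintro s ⟨θ, ⟨hθ1, hθ2, hθ3⟩, rfl⟩
          have hb : ∀ i, |θ.1 i| ≤ 1 := fun i =>
            le_trans (le_ciSup (f := fun i => |θ.1 i|) (Set.Finite.bddAbove (Set.finite_range _)) i) hθ1
          have h1 : -S ≤ ∑ i, (-(x i)) * θ.1 i := by
            rw [hSdef, ← Finset.sum_neg_distrib]
            apply Finset.sum_le_sum
            intro i _
            have := abs_mul (-(x i)) (θ.1 i)
            have h := neg_abs_le ((-(x i)) * θ.1 i)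
            have : |(-(x i)) * θ.1 i| ≤ |x i| := by
              rw [abs_mul, abs_neg]
              calc |x i| * |θ.1 i| ≤ |x i| * 1 := by
                    exact mul_le_mul_of_nonneg_left (hb i) (abs_nonneg _)
                _ = |x i| := mul_one _
            linarith
          have h2 : -z ≤ (-z) * θ.2 := by nlinarith
          linarith
        · refine ⟨(fun i => if 0 ≤ x i then 1 else -1, 1), ⟨?_, zero_le_one, le_refl _⟩, ?_⟩
          · have : ∀ i, |(fun i => if 0 ≤ x i then (1:ℝ) else -1) i| = 1 := fun i => by
              by_cases h : 0 ≤ x i <;> simp [h]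
            simp only [this]
            exact le_of_eq (ciSup_const)
          · have : ∀ i, (-(x i)) * (if 0 ≤ x i then (1:ℝ) else -1) = -|x i| := fun i => by
              by_cases h : 0 ≤ x i
              · simp [h, abs_of_nonneg h]
              · simp only [h, if_false, abs_of_neg (lt_of_not_ge h)]; ring
            simp only [this, Finset.sum_neg_distrib, ← hSdef, mul_one]; ring
      · apply le_csInf
        · exact ⟨(∑ i, (-(x i)) * 0) + (-z) * 0,
            ⟨(0, 0), ⟨by simpa using zero_le_one, le_refl _, zero_le_one⟩, rfl⟩⟩
        · rintro s ⟨θ, ⟨hθ1, hθ2, hθ3⟩, rfl⟩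
          have hb : ∀ i, |θ.1 i| ≤ 1 := fun i =>
            le_trans (le_ciSup (f := fun i => |θ.1 i|) (Set.Finite.bddAbove (Set.finite_range _)) i) hθ1
          have h1 : -S ≤ ∑ i, (-(x i)) * θ.1 i := by
            rw [hSdef, ← Finset.sum_neg_distrib]
            apply Finset.sum_le_sum
            intro i _
            have h := neg_abs_le ((-(x i)) * θ.1 i)
            have : |(-(x i)) * θ.1 i| ≤ |x i| := by
              rw [abs_mul, abs_neg]
              calc |x i| * |θ.1 i| ≤ |x i| * 1 :=
                    mul_le_mul_of_nonneg_left (hb i) (abs_nonneg _)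
                _ = |x i| := mul_one _
            linarith
          have h2 : -z ≤ (-z) * θ.2 := by nlinarith
          linarith
    rw [this]; ring
end

section
/- Fix a natural number m ≥ 1, a real constant L ≥ 0, and a natural number T ≥ 1. Let 𝒮^m_approach = {(x, z) ∈ ℝ^{m+1} × ℝ : ‖x‖₁ ≤ 1/m and z ≤ 4L/m²} and 𝒦 = {(a, b) ∈ ℝ^{m+1} × ℝ : ‖a‖_∞ ≤ 1 and 0 ≤ b ≤ 1}. Suppose ℓ_1, …, ℓ_T ∈ ℝ^{m+2} and θ_1, …, θ_T ∈ 𝒦 satisfy ⟨ℓ_t, θ_t⟩ ≤ 1/m + 4L/m² for every t, and suppose the average v = (1/T) ∑_{t=1}^T ℓ_t satisfies ‖v_{1:m+1}‖₁ ≥ 1/m and v_{m+2} ≥ 4L/m², where v_{1:m+1} denotes the first m+1 coordinates of v. Then dist₁(v, 𝒮^m_approach) ≤ (1/T) · [ ∑_{t=1}^T ⟨−ℓ_t, θ_t⟩ − min_{θ ∈ 𝒦} ∑_{t=1}^T ⟨−ℓ_t, θ⟩ ]. -/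
/-- The bound relating the ℓ₁ distance of the average payoff vector to the
approachable set `𝒮^m_approach` to the regret of an online linear optimization
algorithm over the dual set `𝒦`. Vectors in `ℝ^{m+2}` are represented as pairs
`(Fin (m+1) → ℝ) × ℝ`. -/
theorem stmt11 (m T : ℕ) (hm : 1 ≤ m) (hT : 1 ≤ T) (L : ℝ) (hL : 0 ≤ L)
    (ℓ : Fin T → (Fin (m+1) → ℝ) × ℝ) (θ : Fin T → (Fin (m+1) → ℝ) × ℝ)
    (hθ : ∀ t, (⨆ i, |(θ t).1 i|) ≤ 1 ∧ 0 ≤ (θ t).2 ∧ (θ t).2 ≤ 1)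
    (hstep : ∀ t, (∑ i, (ℓ t).1 i * (θ t).1 i) + (ℓ t).2 * (θ t).2
        ≤ 1 / (m : ℝ) + 4 * L / m ^ 2)
    (v : (Fin (m+1) → ℝ) × ℝ)
    (hv : v = ((T : ℝ)⁻¹ • ∑ t, (ℓ t).1, (T : ℝ)⁻¹ * ∑ t, (ℓ t).2))
    (hv1 : 1 / (m : ℝ) ≤ ∑ i, |v.1 i|) (hv2 : 4 * L / m ^ 2 ≤ v.2) :
    sInf {d : ℝ | ∃ u : (Fin (m+1) → ℝ) × ℝ,
        ((∑ i, |u.1 i|) ≤ 1 / (m : ℝ) ∧ u.2 ≤ 4 * L / m ^ 2) ∧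
        d = (∑ i, |v.1 i - u.1 i|) + |v.2 - u.2|}
      ≤ (T : ℝ)⁻¹ *
        ((∑ t, ((∑ i, (-(ℓ t).1 i) * (θ t).1 i) + (-(ℓ t).2) * (θ t).2)) -
          sInf {s : ℝ | ∃ θ' : (Fin (m+1) → ℝ) × ℝ,
            ((⨆ i, |θ'.1 i|) ≤ 1 ∧ 0 ≤ θ'.2 ∧ θ'.2 ≤ 1) ∧
            s = ∑ t, ((∑ i, (-(ℓ t).1 i) * θ'.1 i) + (-(ℓ t).2) * θ'.2)}) := by
  have hm0 : (0:ℝ) < m := Nat.cast_pos.mpr hm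
  have hT0 : (0:ℝ) < T := Nat.cast_pos.mpr hT
  have hv1' : ∀ i, ∑ t, (ℓ t).1 i = (T:ℝ) * v.1 i := by
    intro i
    rw [hv]
    simp only [Pi.smul_apply, smul_eq_mul, Finset.sum_apply]
    field_simp
  have hv2' : ∑ t, (ℓ t).2 = (T:ℝ) * v.2 := by
    rw [hv]; field_simp
  set N : ℝ := ∑ i, |v.1 i| with hN
  have hN0 : 0 < N := lt_of_lt_of_le (by positivity) hv1
  set c : ℝ := 1 / ((m:ℝ) * N) with hc
  have hc0 : 0 < c := by positivity
  have hc1 : c ≤ 1 := by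
    rw [hc, div_le_one (by positivity)]
    have h1 : 1 ≤ N * m := (div_le_iff₀ hm0).mp hv1
    linarith
  have hcN : c * N = 1 / (m:ℝ) := by rw [hc]; field_simp
  -- distance bound via explicit witness
  have hmemD : (N - 1/(m:ℝ)) + (v.2 - 4*L/(m:ℝ)^2) ∈ {d : ℝ | ∃ u : (Fin (m+1) → ℝ) × ℝ,
        ((∑ i, |u.1 i|) ≤ 1 / (m : ℝ) ∧ u.2 ≤ 4 * L / m ^ 2) ∧
        d = (∑ i, |v.1 i - u.1 i|) + |v.2 - u.2|} := by
    refine ⟨(fun i => c * v.1 i, 4*L/(m:ℝ)^2), ⟨?_, le_refl _⟩, ?_⟩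
    · have e : ∑ i, |c * v.1 i| = c * N := by
        rw [hN, Finset.mul_sum]
        exact Finset.sum_congr rfl fun i _ => by rw [abs_mul, abs_of_pos hc0]
      rw [e, hcN]
    · have h1 : ∑ i, |v.1 i - c * v.1 i| = N - 1/(m:ℝ) := by
        have e : ∀ i ∈ Finset.univ, |v.1 i - c * v.1 i| = (1 - c) * |v.1 i| := by
          intro i _
          rw [show v.1 i - c * v.1 i = (1-c) * v.1 i by ring, abs_mul,
            abs_of_nonneg (by linarith)]
        rw [Finset.sum_congr rfl e, ← Finset.mul_sum, ← hN]
        nlinarith [hcN]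
      have h2 : |v.2 - 4*L/(m:ℝ)^2| = v.2 - 4*L/(m:ℝ)^2 :=
        abs_of_nonneg (by linarith [hv2])
      rw [h1, h2]
  have hdistle : sInf {d : ℝ | ∃ u : (Fin (m+1) → ℝ) × ℝ,
        ((∑ i, |u.1 i|) ≤ 1 / (m : ℝ) ∧ u.2 ≤ 4 * L / m ^ 2) ∧
        d = (∑ i, |v.1 i - u.1 i|) + |v.2 - u.2|}
      ≤ (N - 1/(m:ℝ)) + (v.2 - 4*L/(m:ℝ)^2) := by
    refine csInf_le ⟨0, ?_⟩ hmemD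
    rintro d ⟨u, _, rfl⟩
    positivity
  -- the dual set is bounded below
  have hKbdd : BddBelow {s : ℝ | ∃ θ' : (Fin (m+1) → ℝ) × ℝ,
            ((⨆ i, |θ'.1 i|) ≤ 1 ∧ 0 ≤ θ'.2 ∧ θ'.2 ≤ 1) ∧
            s = ∑ t, ((∑ i, (-(ℓ t).1 i) * θ'.1 i) + (-(ℓ t).2) * θ'.2)} := by
    refine ⟨-∑ t, ((∑ i, |(ℓ t).1 i|) + |(ℓ t).2|), ?_⟩
    rintro s ⟨θ', ⟨h1, h2a, h2b⟩, rfl⟩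
    have hcoord : ∀ i, |θ'.1 i| ≤ 1 := fun i =>
      le_trans (le_ciSup (f := fun i => |θ'.1 i|) (Set.finite_range _).bddAbove i) h1
    have hterm : ∀ t ∈ Finset.univ, -((∑ i, |(ℓ t).1 i|) + |(ℓ t).2|)
        ≤ (∑ i, (-(ℓ t).1 i) * θ'.1 i) + (-(ℓ t).2) * θ'.2 := by
      intro t _
      have hA : ∀ i ∈ Finset.univ, -|(ℓ t).1 i| ≤ (-(ℓ t).1 i) * θ'.1 i := by
        intro i _
        calc -|(ℓ t).1 i| ≤ -(|(ℓ t).1 i| * |θ'.1 i|) := by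
              nlinarith [abs_nonneg ((ℓ t).1 i), hcoord i, abs_nonneg (θ'.1 i)]
          _ = -|(-(ℓ t).1 i) * θ'.1 i| := by rw [abs_mul, abs_neg]
          _ ≤ _ := neg_abs_le _
      have hB : -|(ℓ t).2| ≤ (-(ℓ t).2) * θ'.2 := by
        calc -|(ℓ t).2| ≤ -(|(ℓ t).2| * θ'.2) := by
              nlinarith [abs_nonneg (ℓ t).2]
          _ = -|(-(ℓ t).2) * θ'.2| := by
              rw [abs_mul, abs_neg, abs_of_nonneg h2a]
          _ ≤ _ := neg_abs_le _
      have := Finset.sum_le_sum hA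
      rw [Finset.sum_neg_distrib] at this
      linarith
    have := Finset.sum_le_sum hterm
    rw [Finset.sum_neg_distrib] at this
    exact this
  -- the sign vector witness
  set sgn : Fin (m+1) → ℝ := fun i => if 0 ≤ v.1 i then 1 else -1 with hsgn
  have hsgn1 : ∀ i, |sgn i| = 1 := by
    intro i; rw [hsgn]; dsimp only; split <;> simp
  have hsgnmul : ∀ i, v.1 i * sgn i = |v.1 i| := by
    intro i; rw [hsgn]; dsimp only; split
    · rw [mul_one, abs_of_nonneg ‹_›]
    · rw [mul_neg_one, abs_of_neg (lt_of_not_ge ‹_›)]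
  have hmemK : (-(T*N) - T*v.2) ∈ {s : ℝ | ∃ θ' : (Fin (m+1) → ℝ) × ℝ,
            ((⨆ i, |θ'.1 i|) ≤ 1 ∧ 0 ≤ θ'.2 ∧ θ'.2 ≤ 1) ∧
            s = ∑ t, ((∑ i, (-(ℓ t).1 i) * θ'.1 i) + (-(ℓ t).2) * θ'.2)} := by
    refine ⟨(sgn, 1), ⟨ciSup_le fun i => (hsgn1 i).le, zero_le_one, le_refl 1⟩, ?_⟩
    have e1 : ∑ t, ∑ i, (-(ℓ t).1 i) * sgn i = -((T:ℝ) * N) := by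
      rw [Finset.sum_comm]
      have e : ∀ i ∈ Finset.univ, ∑ t : Fin T, (-(ℓ t).1 i) * sgn i
          = -((T:ℝ) * |v.1 i|) := by
        intro i _
        have step : ∑ t : Fin T, (-(ℓ t).1 i) * sgn i
            = -((∑ t : Fin T, (ℓ t).1 i) * sgn i) := by
          rw [Finset.sum_mul, ← Finset.sum_neg_distrib]
          exact Finset.sum_congr rfl fun t _ => by ring
        rw [step, hv1' i, mul_assoc, hsgnmul i]
      rw [Finset.sum_congr rfl e, Finset.sum_neg_distrib, hN, Finset.mul_sum]
    have e2 : ∑ t, (-(ℓ t).2) * (1:ℝ) = -((T:ℝ) * v.2) := by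
      rw [← hv2', ← Finset.sum_neg_distrib]
      exact (Finset.sum_congr rfl fun t _ => by ring).symm
    rw [Finset.sum_add_distrib, e1, e2]
    ring
  have hKle : sInf {s : ℝ | ∃ θ' : (Fin (m+1) → ℝ) × ℝ,
            ((⨆ i, |θ'.1 i|) ≤ 1 ∧ 0 ≤ θ'.2 ∧ θ'.2 ≤ 1) ∧
            s = ∑ t, ((∑ i, (-(ℓ t).1 i) * θ'.1 i) + (-(ℓ t).2) * θ'.2)}
      ≤ -(T*N) - T*v.2 := csInf_le hKbdd hmemK
  -- lower bound on the algorithm's payoff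
  have hA : -((T:ℝ) * (1/(m:ℝ) + 4*L/(m:ℝ)^2))
      ≤ ∑ t, ((∑ i, (-(ℓ t).1 i) * (θ t).1 i) + (-(ℓ t).2) * (θ t).2) := by
    have hterm : ∀ t ∈ Finset.univ, -(1/(m:ℝ) + 4*L/(m:ℝ)^2)
        ≤ (∑ i, (-(ℓ t).1 i) * (θ t).1 i) + (-(ℓ t).2) * (θ t).2 := by
      intro t _
      have h := hstep t
      have e : (∑ i, (-(ℓ t).1 i) * (θ t).1 i) + (-(ℓ t).2) * (θ t).2
          = -((∑ i, (ℓ t).1 i * (θ t).1 i) + (ℓ t).2 * (θ t).2) := by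
        rw [neg_add, ← Finset.sum_neg_distrib]
        congr 1
        · exact Finset.sum_congr rfl fun i _ => by ring
        · ring
      rw [e]; linarith
    calc -((T:ℝ) * (1/(m:ℝ) + 4*L/(m:ℝ)^2))
        = ∑ _t : Fin T, -(1/(m:ℝ) + 4*L/(m:ℝ)^2) := by
          rw [Finset.sum_const, Finset.card_fin, nsmul_eq_mul]; ring
      _ ≤ _ := Finset.sum_le_sum hterm
  refine le_trans hdistle ?_
  have key : (T:ℝ) * ((N - 1/(m:ℝ)) + (v.2 - 4*L/(m:ℝ)^2))
      ≤ (∑ t, ((∑ i, (-(ℓ t).1 i) * (θ t).1 i) + (-(ℓ t).2) * (θ t).2))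
        - sInf {s : ℝ | ∃ θ' : (Fin (m+1) → ℝ) × ℝ,
            ((⨆ i, |θ'.1 i|) ≤ 1 ∧ 0 ≤ θ'.2 ∧ θ'.2 ≤ 1) ∧
            s = ∑ t, ((∑ i, (-(ℓ t).1 i) * θ'.1 i) + (-(ℓ t).2) * θ'.2)} := by
    nlinarith [hKle, hA]
  calc (N - 1/(m:ℝ)) + (v.2 - 4*L/(m:ℝ)^2)
      = (T:ℝ)⁻¹ * ((T:ℝ) * ((N - 1/(m:ℝ)) + (v.2 - 4*L/(m:ℝ)^2))) := by
        field_simp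
    _ ≤ _ := mul_le_mul_of_nonneg_left key (by positivity)
end

section
/- Let S : [0,1] × {0,1} → ℝ be a proper scoring rule that is L-Lipschitz in its first argument, let b ≥ 0, let m ≥ 2 be a natural number, and let j be a natural number with m/2 ≤ j ≤ m − 1. Then 0 ≤ b·[ (S((j+1)/m, 1) − S(j/m, 1)) + ((m − j)/j)·(S((j+1)/m, 0) − S(j/m, 0)) ] ≤ 4bL/m². -/
/-! Writing `a = S q 1 - S p 1` and `c = S q 0 - S p 0`, properness at `p` and at `q` gives
`0 ≤ (1 - p) c + p a` and `(1 - q) c + q a ≤ 0`. The first is `p` times the gap; eliminating `a`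
between them gives `p q · gap ≤ (q - p) c ≤ L (q - p)²`. For `p = j/m`, `q = (j+1)/m` with
`j ≥ m/2` we have `p q ≥ 1/4`, whence the bound `4L/m²`. -/

open Set

/-- Vertical gap between the point `(S q 0, S q 1)` of the scoring-rule curve and the line through
`(S p 0, S p 1)` with direction `(p, p - 1)`. -/
noncomputable def tangentGap (S : ℝ → Fin 2 → ℝ) (p q : ℝ) : ℝ :=
  (S q 1 - S p 1) + (1 - p) / p * (S q 0 - S p 0)

section

variable {S : ℝ → Fin 2 → ℝ} {L p q : ℝ}

theorem ProperScoringRule.weighted_increment_nonneg (hS : ProperScoringRule S)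
    (hp : p ∈ Icc (0 : ℝ) 1) (hq : q ∈ Icc (0 : ℝ) 1) :
    0 ≤ (1 - p) * (S q 0 - S p 0) + p * (S q 1 - S p 1) := by
  have h := hS p hp q hq
  unfold Sbar at h
  linarith

theorem mul_tangentGap (hp : p ≠ 0) :
    p * tangentGap S p q = (1 - p) * (S q 0 - S p 0) + p * (S q 1 - S p 1) := by
  unfold tangentGap
  field_simp
  ring

theorem tangentGap_nonneg (hS : ProperScoringRule S) (hp : p ∈ Ioc (0 : ℝ) 1)
    (hq : q ∈ Icc (0 : ℝ) 1) : 0 ≤ tangentGap S p q := by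
  have h := hS.weighted_increment_nonneg (Ioc_subset_Icc_self hp) hq
  rw [← mul_tangentGap hp.1.ne'] at h
  exact nonneg_of_mul_nonneg_right h hp.1

theorem mul_mul_tangentGap_le (hS : ProperScoringRule S) (hL : LipschitzScoringRule S L)
    (hp : p ∈ Ioc (0 : ℝ) 1) (hq : q ∈ Ioc (0 : ℝ) 1) :
    p * q * tangentGap S p q ≤ L * (q - p) ^ 2 := by
  have hpq : p * tangentGap S p q = _ := mul_tangentGap hp.1.ne'
  have hqp := hS.weighted_increment_nonneg (Ioc_subset_Icc_self hq) (Ioc_subset_Icc_self hp)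
  have hc : |S q 0 - S p 0| ≤ L * |q - p| :=
    hL q (Ioc_subset_Icc_self hq) p (Ioc_subset_Icc_self hp) 0
  have hlin : (q - p) * (S q 0 - S p 0) ≤ L * (q - p) ^ 2 :=
    calc (q - p) * (S q 0 - S p 0) ≤ |q - p| * |S q 0 - S p 0| := by
          rw [← abs_mul]; exact le_abs_self _
      _ ≤ |q - p| * (L * |q - p|) := mul_le_mul_of_nonneg_left hc (abs_nonneg _)
      _ = L * (q - p) ^ 2 := by rw [← sq_abs (q - p)]; ring
  have hsum : p * q * tangentGap S p q +
      p * ((1 - q) * (S p 0 - S q 0) + q * (S p 1 - S q 1)) = (q - p) * (S q 0 - S p 0) := by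
    rw [mul_comm p q, mul_assoc, hpq]; ring
  linarith [mul_nonneg hp.1.le hqp]

theorem tangentGap_le_of_half_le (hS : ProperScoringRule S) (hL : LipschitzScoringRule S L)
    {j m : ℝ} (hm : 0 < m) (hj : m / 2 ≤ j) (hjm : j + 1 ≤ m) :
    tangentGap S (j / m) ((j + 1) / m) ≤ 4 * L / m ^ 2 := by
  have hj0 : 0 < j := by linarith
  have hp : j / m ∈ Ioc (0 : ℝ) 1 := ⟨by positivity, (div_le_one hm).2 (by linarith)⟩
  have hq : (j + 1) / m ∈ Ioc (0 : ℝ) 1 := ⟨by positivity, (div_le_one hm).2 hjm⟩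
  set G := tangentGap S (j / m) ((j + 1) / m)
  have hG : 0 ≤ G := tangentGap_nonneg hS hp (Ioc_subset_Icc_self hq)
  have hscaled : j * (j + 1) * G ≤ L := by
    have h := mul_le_mul_of_nonneg_right (mul_mul_tangentGap_le hS hL hp hq) (sq_nonneg m)
    have e : j / m * ((j + 1) / m) * G * m ^ 2 = j * (j + 1) * G := by field_simp
    have e' : L * ((j + 1) / m - j / m) ^ 2 * m ^ 2 = L := by field_simp; ring
    rwa [e, e'] at h
  have hm2 : m ^ 2 ≤ 4 * j * (j + 1) := by nlinarith
  rw [le_div_iff₀ (by positivity)]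
  nlinarith [mul_le_mul_of_nonneg_right hm2 hG]

end

/-- The key vertical-gap estimate in the proof of Lemma 3.2: the gap between
`D((j+1)/m)` on the scoring-rule curve and the point directly below it on the
tangent line at `D(j/m)` is between `0` and `4bL/m²`. -/
theorem stmt19 (S : ℝ → Fin 2 → ℝ) (L : ℝ)
    (hproper : ProperScoringRule S) (hlip : LipschitzScoringRule S L)
    (b : ℝ) (hb : 0 ≤ b) (m : ℕ) (hm : 2 ≤ m) (j : ℕ)
    (hj1 : (m : ℝ) / 2 ≤ j) (hj2 : j ≤ m - 1) :
    0 ≤ b * ((S (((j : ℝ) + 1) / m) 1 - S ((j : ℝ) / m) 1) +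
          (((m : ℝ) - j) / j) * (S (((j : ℝ) + 1) / m) 0 - S ((j : ℝ) / m) 0)) ∧
    b * ((S (((j : ℝ) + 1) / m) 1 - S ((j : ℝ) / m) 1) +
          (((m : ℝ) - j) / j) * (S (((j : ℝ) + 1) / m) 0 - S ((j : ℝ) / m) 0))
      ≤ 4 * b * L / m ^ 2 := by
  have hm0 : (0 : ℝ) < m := by exact_mod_cast (by omega : 0 < m)
  have hjm : (j : ℝ) + 1 ≤ m := by exact_mod_cast (by omega : j + 1 ≤ m)
  have hj0 : (0 : ℝ) < j := by linarith
  have hgap : (S (((j : ℝ) + 1) / m) 1 - S ((j : ℝ) / m) 1) +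
      (((m : ℝ) - j) / j) * (S (((j : ℝ) + 1) / m) 0 - S ((j : ℝ) / m) 0) =
      tangentGap S (j / m) ((j + 1) / m) := by
    unfold tangentGap
    congr 2
    field_simp
  rw [hgap]
  have hp : (j : ℝ) / m ∈ Ioc (0 : ℝ) 1 := ⟨by positivity, (div_le_one hm0).2 (by linarith)⟩
  have hq : ((j : ℝ) + 1) / m ∈ Icc (0 : ℝ) 1 := ⟨by positivity, (div_le_one hm0).2 hjm⟩
  refine ⟨mul_nonneg hb (tangentGap_nonneg hproper hp hq), ?_⟩
  calc b * tangentGap S (j / m) ((j + 1) / m) ≤ b * (4 * L / m ^ 2) :=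
        mul_le_mul_of_nonneg_left (tangentGap_le_of_half_le hproper hlip hm0 hj1 hjm) hb
    _ = 4 * b * L / m ^ 2 := by ring
end
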